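/- For every element h of the first-level stabilizer H of the Grigorchuk group, writing ψ(h) = (h₀, h₁), the identity h = a·σ(h₀)·a·σ(τ(h₀)⁻¹·h₁) holds in G, where σ and τ are the homomorphisms with σ(a)=aca, σ(b)=d, σ(c)=b, σ(d)=c and τ(a)=d, τ(b)=1, τ(c)=a, τ(d)=a. -/

import Mathlib

/-- The generator `a` of the Grigorchuk group, acting on finite binary sequences. -/
def grigA : List Bool → List Bool
  | [] => []
  | x :: σ => (!x) :: σ

mutual
  /-- The generator `b` of the Grigorchuk group. -/
  def grigB : List Bool → List Bool
    | [] => []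
    | false :: σ => false :: grigA σ
    | true :: σ => true :: grigC σ
  /-- The generator `c` of the Grigorchuk group. -/
  def grigC : List Bool → List Bool
    | [] => []
    | false :: σ => false :: grigA σ
    | true :: σ => true :: grigD σ
  /-- The generator `d` of the Grigorchuk group. -/
  def grigD : List Bool → List Bool
    | [] => []
    | false :: σ => false :: σ
    | true :: σ => true :: grigB σ
end

theorem grigA_involutive : Function.Involutive grigA := by
  intro l
  rcases l with _ | ⟨x, σ⟩
  · rfl
  · cases x <;> rfl

theorem grigBCD_involutive :
    ∀ l : List Bool, grigB (grigB l) = l ∧ grigC (grigC l) = l ∧ grigD (grigD l) = l := by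
  intro l
  induction l with
  | nil => exact ⟨rfl, rfl, rfl⟩
  | cons x σ ih =>
      cases x <;>
        simp [grigB, grigC, grigD, grigA_involutive σ, ih.1, ih.2.1, ih.2.2]

theorem grigB_involutive : Function.Involutive grigB := fun l => (grigBCD_involutive l).1
theorem grigC_involutive : Function.Involutive grigC := fun l => (grigBCD_involutive l).2.1
theorem grigD_involutive : Function.Involutive grigD := fun l => (grigBCD_involutive l).2.2

/-- The generator `a` as a permutation of binary sequences. -/
def aP : Equiv.Perm (List Bool) := grigA_involutive.toPerm
/-- The generator `b` as a permutation of binary sequences. -/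
def bP : Equiv.Perm (List Bool) := grigB_involutive.toPerm
/-- The generator `c` as a permutation of binary sequences. -/
def cP : Equiv.Perm (List Bool) := grigC_involutive.toPerm
/-- The generator `d` as a permutation of binary sequences. -/
def dP : Equiv.Perm (List Bool) := grigD_involutive.toPerm

/-- The Grigorchuk group, as the group of permutations of finite binary sequences
generated by `a`, `b`, `c`, `d`. -/
def Grig : Subgroup (Equiv.Perm (List Bool)) := Subgroup.closure {aP, bP, cP, dP}

/-- `a` as an element of the Grigorchuk group. -/
def ga : Grig := ⟨aP, Subgroup.subset_closure (by simp)⟩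
/-- `b` as an element of the Grigorchuk group. -/
def gb : Grig := ⟨bP, Subgroup.subset_closure (by simp)⟩
/-- `c` as an element of the Grigorchuk group. -/
def gc : Grig := ⟨cP, Subgroup.subset_closure (by simp)⟩
/-- `d` as an element of the Grigorchuk group. -/
def gd : Grig := ⟨dP, Subgroup.subset_closure (by simp)⟩

/-- A permutation of binary sequences preserves the first letter. -/
def FixesFirst (g : Equiv.Perm (List Bool)) : Prop :=
  ∀ (x : Bool) (σ : List Bool), ∃ σ' : List Bool, g (x :: σ) = x :: σ'

/-- The defining property of the subtree-decomposition map `ψ : H → G × G`: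
`h(0σ) = 0·h₀(σ)` and `h(1σ) = 1·h₁(σ)` where `ψ(h) = (h₀, h₁)`. -/
def PsiProp (H : Subgroup Grig) (ψ : H →* Grig × Grig) : Prop :=
  ∀ (h : H) (σ : List Bool),
    ((h : Grig) : Equiv.Perm (List Bool)) (false :: σ) =
        false :: (((ψ h).1 : Grig) : Equiv.Perm (List Bool)) σ ∧
    ((h : Grig) : Equiv.Perm (List Bool)) (true :: σ) =
        true :: (((ψ h).2 : Grig) : Equiv.Perm (List Bool)) σ

/-!
Write `g (x :: w) = (x + m) :: g_x w` for the wreath recursion of `g ∈ G` (`m = rootBit g`,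
`g_x = sectionAt g x`) and `χ = levelParity 2`. Then `g ↦ (m; χ(g₀), χ(g₁))` is a homomorphism
`G → C₂ ≀ C₂`, and following it by `wreathWord d a : C₂ ≀ C₂ → ⟨a, d⟩ ≅ D₈` gives `τ`. The pair
`σ(g) := (τ(g), g)` lies in `G` because it does for the generators. For `h = (h₀, h₁) ∈ H` the
right-hand side is `(h₀ · τ(τ(h₀))⁻¹ τ(h₁), h₁)`, so the identity amounts to `τ(h₁) = τ(τ(h₀))`.
Its symmetric form `τ(g_{¬x}) = τ(τ(g_x))` holds for the generators and is preserved by products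
and inverses.
-/

open Equiv

section WreathWord

variable {M : Type*} [Monoid M]

-- The image of `(m, e) ∈ C₂ ≀ C₂` in `⟨s, t⟩`, the top generator going to `s`
-- and the base generator at `true` to `t`.
def wreathWord (s t : M) (m : Bool) (e : Bool → Bool) : M :=
  s ^ m.toNat * (s * t * s) ^ (e false).toNat * t ^ (e true).toNat

theorem pow_toNat_mul_pow_toNat {x : M} (hx : x * x = 1) (m n : Bool) :
    x ^ m.toNat * x ^ n.toNat = x ^ (m ^^ n).toNat := by
  cases m <;> cases n <;> simp [hx]

theorem wreathWord_mul {s t : M} (hs : s * s = 1) (ht : t * t = 1) (hst : Commute t (s * t * s))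
    (m n : Bool) (e e' : Bool → Bool) :
    wreathWord s t m e * wreathWord s t n e' =
      wreathWord s t (m ^^ n) (fun x => e (x ^^ n) ^^ e' x) := by
  set u := s * t * s with hu_def
  have hu : u * u = 1 := by
    simp only [hu_def, mul_assoc]
    rw [← mul_assoc s s, hs, one_mul, ← mul_assoc t t, ht, one_mul, hs]
  have hts (j : Bool) : t ^ j.toNat * s = s * u ^ j.toNat := by
    cases j <;> simp [hu_def, ← mul_assoc, hs]
  have hus (i : Bool) : u ^ i.toNat * s = s * t ^ i.toNat := by
    cases i <;> simp [hu_def, mul_assoc, hs]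
  have hcomm (i j : Bool) : t ^ j.toNat * u ^ i.toNat = u ^ i.toNat * t ^ j.toNat :=
    (hst.pow_pow _ _).eq
  simp only [wreathWord, ← hu_def, ← pow_toNat_mul_pow_toNat hu, ← pow_toNat_mul_pow_toNat ht]
  cases n <;> simp only [Bool.xor_false, Bool.false_xor, Bool.true_xor, Bool.not_true]
    <;> generalize e false = i, e true = j, e' false = i', e' true = j'
  · simp only [Bool.toNat_false, pow_zero, one_mul, mul_assoc]
    rw [← mul_assoc (t ^ _), hcomm, mul_assoc]
  · calc s ^ m.toNat * u ^ i.toNat * t ^ j.toNat * (s ^ (true).toNat * u ^ i'.toNat * t ^ j'.toNat)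
        = s ^ m.toNat * (u ^ i.toNat * (t ^ j.toNat * s)) * u ^ i'.toNat * t ^ j'.toNat := by
          simp [mul_assoc]
      _ = s ^ m.toNat * s * (t ^ i.toNat * u ^ j.toNat) * u ^ i'.toNat * t ^ j'.toNat := by
          rw [hts, ← mul_assoc (u ^ _) s, hus]; simp only [mul_assoc]
      _ = s ^ m.toNat * s * u ^ j.toNat * u ^ i'.toNat * (t ^ i.toNat * t ^ j'.toNat) := by
          rw [hcomm]; simp only [mul_assoc]; rw [← mul_assoc (t ^ _), hcomm, mul_assoc]
      _ = _ := by
          rw [← pow_toNat_mul_pow_toNat hs m true]; simp [mul_assoc]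

end WreathWord

namespace Grigorchuk

def pair : Perm (List Bool) × Perm (List Bool) →* Perm (List Bool) where
  toFun p :=
    { toFun := fun | [] => [] | x :: w => x :: cond x p.2 p.1 w
      invFun := fun | [] => [] | x :: w => x :: (cond x p.2 p.1)⁻¹ w
      left_inv := by rintro (_ | ⟨_ | _, w⟩) <;> simp
      right_inv := by rintro (_ | ⟨_ | _, w⟩) <;> simp }
  map_one' := by ext (_ | ⟨_ | _, w⟩) <;> rfl
  map_mul' _ _ := by ext (_ | ⟨_ | _, w⟩) <;> rfl

@[simp] theorem pair_apply_nil (p : Perm (List Bool) × Perm (List Bool)) : pair p [] = [] := rfl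

@[simp] theorem pair_apply_cons (p : Perm (List Bool) × Perm (List Bool)) (x : Bool) (w : List Bool) :
    pair p (x :: w) = x :: cond x p.2 p.1 w := rfl

theorem ga_mul_pair_mul_ga (u v : Perm (List Bool)) : ga * pair (u, v) * ga = pair (v, u) := by
  ext (_ | ⟨_ | _, w⟩) <;> rfl

def binaryWreath (K : Subgroup (Perm (List Bool))) : Subgroup (Perm (List Bool)) where
  carrier := {g | g [] = [] ∧ ∃ (m : Bool) (f : Bool → Perm (List Bool)),
    (∀ x, f x ∈ K) ∧ ∀ x w, g (x :: w) = (x ^^ m) :: f x w}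
  one_mem' := ⟨rfl, false, 1, fun _ => K.one_mem, fun _ _ => by simp⟩
  mul_mem' := by
    rintro g h ⟨hg₀, m, f, hfK, hg⟩ ⟨hh₀, n, f', hf'K, hh⟩
    refine ⟨by simp [hg₀, hh₀], m ^^ n, fun x => f (x ^^ n) * f' x,
      fun x => K.mul_mem (hfK _) (hf'K x), fun x w => ?_⟩
    simp [hg, hh, Bool.xor_comm n]
  inv_mem' := by
    rintro g ⟨hg₀, m, f, hfK, hg⟩
    refine ⟨by rw [Perm.inv_eq_iff_eq, hg₀], m, fun x => (f (x ^^ m))⁻¹,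
      fun x => K.inv_mem (hfK _), fun x w => ?_⟩
    rw [Perm.inv_eq_iff_eq, hg]
    simp

theorem grig_le_binaryWreath : Grig ≤ binaryWreath Grig := by
  refine (Subgroup.closure_le _).2 ?_
  rintro _ (rfl | rfl | rfl | rfl)
  · exact ⟨rfl, true, 1, fun _ => Grig.one_mem, by rintro (_ | _) _ <;> rfl⟩
  · exact ⟨rfl, false, fun x => cond x cP aP, by rintro (_ | _); exacts [ga.2, gc.2],
      by rintro (_ | _) _ <;> rfl⟩
  · exact ⟨rfl, false, fun x => cond x dP aP, by rintro (_ | _); exacts [ga.2, gd.2],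
      by rintro (_ | _) _ <;> rfl⟩
  · exact ⟨rfl, false, fun x => cond x bP 1, by rintro (_ | _); exacts [Grig.one_mem, gb.2],
      by rintro (_ | _) _ <;> rfl⟩

theorem exists_decomp (g : Grig) : ∃ (m : Bool) (f : Bool → Grig),
    ∀ x w, (g : Perm (List Bool)) (x :: w) = (x ^^ m) :: (f x : Perm (List Bool)) w := by
  obtain ⟨-, m, f, hfK, hf⟩ := grig_le_binaryWreath g.2
  exact ⟨m, fun x => ⟨f x, hfK x⟩, hf⟩

noncomputable def rootBit (g : Grig) : Bool := (exists_decomp g).choose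

noncomputable def sectionAt (g : Grig) : Bool → Grig := (exists_decomp g).choose_spec.choose

theorem apply_nil (g : Grig) : (g : Perm (List Bool)) [] = [] := (grig_le_binaryWreath g.2).1

theorem apply_cons (g : Grig) (x : Bool) (w : List Bool) :
    (g : Perm (List Bool)) (x :: w) = (x ^^ rootBit g) :: (sectionAt g x : Perm (List Bool)) w :=
  (exists_decomp g).choose_spec.choose_spec x w

theorem rootBit_eq_and_sectionAt_eq {g : Grig} {m : Bool} {f : Bool → Grig}
    (h : ∀ x w, (g : Perm (List Bool)) (x :: w) = (x ^^ m) :: (f x : Perm (List Bool)) w) :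
    rootBit g = m ∧ sectionAt g = f := by
  have h' (x : Bool) (w : List Bool) := (apply_cons g x w).symm.trans (h x w)
  refine ⟨by simpa using congrArg List.head? (h' false []), funext fun x => ?_⟩
  exact Subtype.ext <| Equiv.ext fun w => (List.cons.inj (h' x w)).2

theorem mul_apply_cons (g h : Grig) (x : Bool) (w : List Bool) :
    ((g * h : Grig) : Perm (List Bool)) (x :: w) = (x ^^ (rootBit g ^^ rootBit h)) ::
      ((sectionAt g (x ^^ rootBit h) * sectionAt h x : Grig) : Perm (List Bool)) w := by
  simp [apply_cons, Bool.xor_comm (rootBit g)]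

@[simp] theorem rootBit_mul (g h : Grig) : rootBit (g * h) = (rootBit g ^^ rootBit h) :=
  (rootBit_eq_and_sectionAt_eq (mul_apply_cons g h)).1

@[simp] theorem sectionAt_mul (g h : Grig) (x : Bool) :
    sectionAt (g * h) x = sectionAt g (x ^^ rootBit h) * sectionAt h x :=
  congrFun (rootBit_eq_and_sectionAt_eq (mul_apply_cons g h)).2 x

theorem inv_apply_cons (g : Grig) (x : Bool) (w : List Bool) :
    ((g⁻¹ : Grig) : Perm (List Bool)) (x :: w) =
      (x ^^ rootBit g) :: (((sectionAt g (x ^^ rootBit g))⁻¹ : Grig) : Perm (List Bool)) w := by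
  rw [Subgroup.coe_inv, Perm.inv_eq_iff_eq, apply_cons]
  simp

@[simp] theorem rootBit_inv (g : Grig) : rootBit g⁻¹ = rootBit g :=
  (rootBit_eq_and_sectionAt_eq (inv_apply_cons g)).1

@[simp] theorem sectionAt_inv (g : Grig) (x : Bool) :
    sectionAt g⁻¹ x = (sectionAt g (x ^^ rootBit g))⁻¹ :=
  congrFun (rootBit_eq_and_sectionAt_eq (inv_apply_cons g)).2 x

@[simp] theorem decomp_one : rootBit 1 = false ∧ sectionAt 1 = fun _ => 1 :=
  rootBit_eq_and_sectionAt_eq fun _ _ => by simp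

@[simp] theorem decomp_ga : rootBit ga = true ∧ sectionAt ga = fun _ => 1 :=
  rootBit_eq_and_sectionAt_eq <| by rintro (_ | _) _ <;> rfl

@[simp] theorem decomp_gb : rootBit gb = false ∧ sectionAt gb = fun x => cond x gc ga :=
  rootBit_eq_and_sectionAt_eq <| by rintro (_ | _) _ <;> rfl

@[simp] theorem decomp_gc : rootBit gc = false ∧ sectionAt gc = fun x => cond x gd ga :=
  rootBit_eq_and_sectionAt_eq <| by rintro (_ | _) _ <;> rfl

@[simp] theorem decomp_gd : rootBit gd = false ∧ sectionAt gd = fun x => cond x gb 1 :=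
  rootBit_eq_and_sectionAt_eq <| by rintro (_ | _) _ <;> rfl

-- The parity of the number of vertices on level `n` at which `g` swaps the two subtrees below.
noncomputable def levelParity : ℕ → Grig → Bool
  | 0, g => rootBit g
  | n + 1, g => levelParity n (sectionAt g false) ^^ levelParity n (sectionAt g true)

theorem levelParity_mul (n : ℕ) (g h : Grig) :
    levelParity n (g * h) = (levelParity n g ^^ levelParity n h) := by
  induction n generalizing g h with
  | zero => exact rootBit_mul g h
  | succ n ih =>
    cases hh : rootBit h <;> simp [levelParity, ih, hh, Bool.xor_comm, Bool.xor_left_comm]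

theorem gd_mul_self : gd * gd = 1 := Subtype.ext (Equiv.ext grigD_involutive)

theorem ga_mul_self : ga * ga = 1 := Subtype.ext (Equiv.ext grigA_involutive)

theorem commute_ga_gd_mul_ga_mul_gd : Commute ga (gd * ga * gd) :=
  Subtype.ext <| by ext (_ | ⟨_ | _, w⟩) <;> rfl

noncomputable def tau : Grig →* Grig :=
  MonoidHom.mk' (fun g => wreathWord gd ga (rootBit g) fun x => levelParity 2 (sectionAt g x))
    fun g h => by
      rw [wreathWord_mul gd_mul_self ga_mul_self commute_ga_gd_mul_ga_mul_gd]
      simp only [rootBit_mul, sectionAt_mul, levelParity_mul]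

@[simp] theorem tau_ga : tau ga = gd := by simp [tau, wreathWord, levelParity]

@[simp] theorem tau_gb : tau gb = 1 := by simp [tau, wreathWord, levelParity]

@[simp] theorem tau_gc : tau gc = ga := by simp [tau, wreathWord, levelParity]

@[simp] theorem tau_gd : tau gd = ga := by simp [tau, wreathWord, levelParity]

theorem closure_generators : Subgroup.closure ({ga, gb, gc, gd} : Set Grig) = ⊤ := by
  have h : ({ga, gb, gc, gd} : Set Grig) = Subtype.val ⁻¹' {aP, bP, cP, dP} := by
    ext g
    simp only [Set.mem_insert_iff, Set.mem_singleton_iff, Set.mem_preimage, Subtype.ext_iff]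
    rfl
  rw [h]
  exact Subgroup.closure_closure_coe_preimage

theorem pair_gd_ga : pair (gd, ga) = ((ga * gc * ga : Grig) : Perm (List Bool)) := by
  ext (_ | ⟨_ | _, w⟩) <;> rfl

theorem pair_one_gb : pair (((1 : Grig) : Perm (List Bool)), gb) = gd := by
  ext (_ | ⟨_ | _, w⟩) <;> rfl

theorem pair_ga_gc : pair (ga, gc) = gb := by ext (_ | ⟨_ | _, w⟩) <;> rfl

theorem pair_ga_gd : pair (ga, gd) = gc := by ext (_ | ⟨_ | _, w⟩) <;> rfl

noncomputable def sigmaPerm : Grig →* Perm (List Bool) :=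
  pair.comp ((Grig.subtype.comp tau).prod Grig.subtype)

theorem sigmaPerm_mem (g : Grig) : sigmaPerm g ∈ Grig := by
  suffices Subgroup.closure {ga, gb, gc, gd} ≤ Grig.comap sigmaPerm from
    this (closure_generators ▸ Subgroup.mem_top g)
  refine (Subgroup.closure_le _).2 ?_
  rintro _ (rfl | rfl | rfl | rfl) <;> simp only [Subgroup.coe_comap, Set.mem_preimage, sigmaPerm,
    MonoidHom.comp_apply, MonoidHom.prod_apply, Subgroup.coe_subtype]
  · rw [tau_ga, pair_gd_ga]; exact (ga * gc * ga).2
  · rw [tau_gb, pair_one_gb]; exact gd.2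
  · rw [tau_gc, pair_ga_gc]; exact gb.2
  · rw [tau_gd, pair_ga_gd]; exact gc.2

noncomputable def sigma : Grig →* Grig := sigmaPerm.codRestrict Grig sigmaPerm_mem

theorem coe_sigma (g : Grig) : (sigma g : Perm (List Bool)) = pair (tau g, g) := rfl

theorem sigma_ga : sigma ga = ga * gc * ga := by rw [Subtype.ext_iff, coe_sigma, tau_ga, pair_gd_ga]

theorem sigma_gb : sigma gb = gd := by rw [Subtype.ext_iff, coe_sigma, tau_gb, pair_one_gb]

theorem sigma_gc : sigma gc = gb := by rw [Subtype.ext_iff, coe_sigma, tau_gc, pair_ga_gc]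

theorem sigma_gd : sigma gd = gc := by rw [Subtype.ext_iff, coe_sigma, tau_gd, pair_ga_gd]

-- Stated for both letters, so that it survives multiplication by elements swapping the subtrees.
theorem tau_sectionAt_not (g : Grig) (x : Bool) :
    tau (sectionAt g !x) = tau (tau (sectionAt g x)) := by
  have hg : g ∈ Subgroup.closure ({ga, gb, gc, gd} : Set Grig) := closure_generators ▸ trivial
  induction hg using Subgroup.closure_induction generalizing x with
  | mem g hg =>
    rcases hg with rfl | rfl | rfl | rfl <;> cases x <;>
      simp
  | one => simp
  | mul g h _ _ hg hh => simp [hh, ← hg]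
  | inv g _ hg => simp [← hg]

theorem fixesFirst_iff (g : Grig) : FixesFirst g ↔ rootBit g = false := by
  refine ⟨fun h => ?_, fun h x w => ⟨_, by rw [apply_cons, h, Bool.xor_false]⟩⟩
  obtain ⟨_, hw⟩ := h false []
  simpa [apply_cons] using congrArg List.head? hw

def firstLevelStab : Subgroup Grig where
  carrier := {g | rootBit g = false}
  mul_mem' {g h} (hg : rootBit g = false) (hh : rootBit h = false) := by simp [hg, hh]
  one_mem' := decomp_one.1
  inv_mem' {g} (hg : rootBit g = false) := by simpa using hg

noncomputable def stabSections : firstLevelStab →* Grig × Grig where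
  toFun h := (sectionAt h false, sectionAt h true)
  map_one' := by simp
  map_mul' h h' := by simp [show rootBit (h' : Grig) = false from h'.2]

theorem psiProp_stabSections : PsiProp firstLevelStab stabSections := fun h w => by
  simp [stabSections, apply_cons, show rootBit (h : Grig) = false from h.2]

theorem coe_eq_pair {g : Grig} (hg : rootBit g = false) :
    (g : Perm (List Bool)) = pair (sectionAt g false, sectionAt g true) := by
  ext (_ | ⟨_ | _, w⟩) <;> simp [apply_nil, apply_cons, hg]

end Grigorchuk

open Grigorchuk

/-- For every element `h` of the first-level stabilizer `H` of the Grigorchuk group,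
writing `ψ(h) = (h₀, h₁)`, one has `h = a·σ(h₀)·a·σ(τ(h₀)⁻¹·h₁)`, where `σ` and `τ` are
the homomorphisms with `σ(a)=aca, σ(b)=d, σ(c)=b, σ(d)=c` and `τ(a)=d, τ(b)=1, τ(c)=a,
τ(d)=a`. -/
theorem grigorchuk_reconstruction_identity :
    ∃ H : Subgroup Grig,
      (∀ g : Grig, g ∈ H ↔ FixesFirst (g : Equiv.Perm (List Bool))) ∧
      ∃ ψ : H →* Grig × Grig, PsiProp H ψ ∧
      ∃ σ τ : Grig →* Grig,
        σ ga = ga * gc * ga ∧ σ gb = gd ∧ σ gc = gb ∧ σ gd = gc ∧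
        τ ga = gd ∧ τ gb = 1 ∧ τ gc = ga ∧ τ gd = ga ∧
        ∀ h : H, (h : Grig) =
          ga * σ (ψ h).1 * ga * σ ((τ (ψ h).1)⁻¹ * (ψ h).2) := by
  refine ⟨firstLevelStab, fun g => (fixesFirst_iff g).symm, stabSections, psiProp_stabSections,
    sigma, tau, sigma_ga, sigma_gb, sigma_gc, sigma_gd, tau_ga, tau_gb, tau_gc, tau_gd, fun h => ?_⟩
  set h₀ := sectionAt h false
  set h₁ := sectionAt h true
  have hτ : tau ((tau h₀)⁻¹ * h₁) = 1 := by
    rw [map_mul, map_inv, ← tau_sectionAt_not, Bool.not_false, inv_mul_cancel]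
  apply Subtype.ext
  change (h : Perm (List Bool)) =
    ga * pair (tau h₀, h₀) * ga * pair (tau ((tau h₀)⁻¹ * h₁), ((tau h₀)⁻¹ * h₁ : Grig))
  rw [coe_eq_pair h.2, ga_mul_pair_mul_ga, ← map_mul, Prod.mk_mul_mk, ← Subgroup.coe_mul,
    ← Subgroup.coe_mul, hτ, mul_one, mul_inv_cancel_left]
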